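/- Let N ≥ 2 be an integer, ε > 0, β > 0, and let 0 = r_0 < r_1 < … < r_N = R be a mesh whose step sizes h_n := r_n − r_{n−1} are nondecreasing (h_n ≤ h_{n+1} for 1 ≤ n ≤ N−1); set h̄_i := (h_i + h_{i+1})/2. Define the mesh function E_i := ∏_{n=1}^{i}(1 + βh_n/ε) / ∏_{n=1}^{N}(1 + βh_n/ε) for 0 ≤ i ≤ N. Suppose c_i ≥ β and b_i ≥ 0 for 1 ≤ i ≤ N−1 and define L^N Z_i := −ε·((Z_{i+1} − Z_i)/h_{i+1} − (Z_i − Z_{i−1})/h_i)/h̄_i + c_i·(Z_i − Z_{i−1})/h_i + b_i·Z_i. Then 0 < E_i ≤ 1 for all i, E_N = 1, and L^N E_i ≥ 0 for every 1 ≤ i ≤ N−1. -/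
import Mathlib


/-- Mesh step sizes `h n = r n - r (n-1)`. -/
noncomputable def meshh (r : ℕ → ℝ) (n : ℕ) : ℝ := r n - r (n - 1)

/-- The discrete barrier function
`E_i = ∏_{n=1}^{i}(1 + β h_n/ε) / ∏_{n=1}^{N}(1 + β h_n/ε)`. -/
noncomputable def barrierE (ε β : ℝ) (r : ℕ → ℝ) (N i : ℕ) : ℝ :=
  (∏ n ∈ Finset.Icc 1 i, (1 + β * meshh r n / ε)) /
    (∏ n ∈ Finset.Icc 1 N, (1 + β * meshh r n / ε))

/-- One-dimensional upwinded operator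
`L^N Z_i = -ε(D⁺Z - D⁻Z)_i/h̄_i + c_i D⁻Z_i + b_i Z_i` on a nonuniform mesh. -/
noncomputable def LN1 (ε : ℝ) (h : ℕ → ℝ) (c b : ℕ → ℝ) (Z : ℕ → ℝ) (i : ℕ) : ℝ :=
  -ε * ((Z (i+1) - Z i) / h (i+1) - (Z i - Z (i-1)) / h i) / ((h i + h (i+1)) / 2)
  + c i * (Z i - Z (i-1)) / h i + b i * Z i

lemma barrierE_succ (ε β : ℝ) (r : ℕ → ℝ) (N j : ℕ) (hj : 1 ≤ j) :
    barrierE ε β r N j =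
      barrierE ε β r N (j-1) * (1 + β * meshh r j / ε) := by
  have hj' : j - 1 + 1 = j := by omega
  unfold barrierE
  conv_lhs => rw [← hj', Finset.prod_Icc_succ_top (by omega), hj']
  rw [mul_div_right_comm]

/-- The barrier function on a mesh with nondecreasing step sizes satisfies
`0 < E_i ≤ 1`, `E_N = 1` and `L^N E_i ≥ 0` at interior indices. -/
theorem stmt6 (N : ℕ) (hN : 2 ≤ N) (ε β R : ℝ) (hε : 0 < ε) (hβ : 0 < β)
    (r : ℕ → ℝ) (hr0 : r 0 = 0) (hrN : r N = R)
    (hrmono : ∀ n, n < N → r n < r (n+1))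
    (hstep : ∀ n, 1 ≤ n → n ≤ N - 1 → meshh r n ≤ meshh r (n+1))
    (c b : ℕ → ℝ)
    (hc : ∀ i, 1 ≤ i → i ≤ N - 1 → β ≤ c i)
    (hb : ∀ i, 1 ≤ i → i ≤ N - 1 → 0 ≤ b i) :
    (∀ i, i ≤ N → 0 < barrierE ε β r N i ∧ barrierE ε β r N i ≤ 1) ∧
    barrierE ε β r N N = 1 ∧
    (∀ i, 1 ≤ i → i ≤ N - 1 → 0 ≤ LN1 ε (meshh r) c b (barrierE ε β r N) i) := by
  have hmesh : ∀ n, 1 ≤ n → n ≤ N → 0 < meshh r n := by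
    intro n h1 h2
    have h := hrmono (n-1) (by omega)
    have hn' : n - 1 + 1 = n := by omega
    rw [hn'] at h
    simpa [meshh] using sub_pos.mpr h
  have hfac : ∀ n, 1 ≤ n → n ≤ N → (1:ℝ) ≤ 1 + β * meshh r n / ε := by
    intro n h1 h2
    have := hmesh n h1 h2
    have : 0 < β * meshh r n / ε := by positivity
    linarith
  have hPpos : ∀ i, i ≤ N → 0 < ∏ n ∈ Finset.Icc 1 i, (1 + β * meshh r n / ε) := by
    intro i hi
    apply Finset.prod_pos
    intro n hn
    simp only [Finset.mem_Icc] at hn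
    exact lt_of_lt_of_le one_pos (hfac n hn.1 (le_trans hn.2 hi))
  have hPN := hPpos N le_rfl
  have hEpos : ∀ i, i ≤ N → 0 < barrierE ε β r N i := by
    intro i hi
    exact div_pos (hPpos i hi) hPN
  have hEle : ∀ i, i ≤ N → barrierE ε β r N i ≤ 1 := by
    intro i hi
    rw [barrierE, div_le_one hPN]
    have hIcc : ∀ m : ℕ, Finset.Icc 1 m = Finset.Ioc 0 m := fun m => Finset.Icc_add_one_left_eq_Ioc 0 m
    rw [hIcc i, hIcc N, ← Finset.prod_Ioc_consecutive _ (Nat.zero_le i) hi]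
    have hone : (1:ℝ) ≤ ∏ n ∈ Finset.Ioc i N, (1 + β * meshh r n / ε) := by
      have := Finset.prod_le_prod (s := Finset.Ioc i N)
        (f := fun _ => (1:ℝ)) (g := fun n => 1 + β * meshh r n / ε)
        (fun _ _ => zero_le_one)
        (fun n hn => by
          simp only [Finset.mem_Ioc] at hn
          exact hfac n (by omega) hn.2)
      simpa using this
    have hpos : 0 < ∏ n ∈ Finset.Ioc 0 i, (1 + β * meshh r n / ε) := by
      rw [← hIcc i]; exact hPpos i hi
    exact le_mul_of_one_le_right hpos.le hone
  refine ⟨fun i hi => ⟨hEpos i hi, hEle i hi⟩, div_self (ne_of_gt hPN), ?_⟩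
  intro i hi1 hiN
  have hiN' : i + 1 ≤ N := by omega
  have hiltN : i ≤ N := by omega
  set Ei := barrierE ε β r N i with hEi
  set Em := barrierE ε β r N (i-1) with hEm
  set hp := meshh r i with hhp
  set hq := meshh r (i+1) with hhq
  have hppos : 0 < hp := hmesh i hi1 hiltN
  have hqpos : 0 < hq := hmesh (i+1) (by omega) hiN'
  have hpq : hp ≤ hq := hstep i hi1 hiN
  have hEipos : 0 < Ei := hEpos i hiltN
  have hEmpos : 0 < Em := hEpos (i-1) (by omega)
  have hA : barrierE ε β r N (i+1) - Ei = Ei * (β * hq / ε) := by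
    have := barrierE_succ ε β r N (i+1) (by omega)
    simp only [Nat.add_sub_cancel] at this
    rw [this, ← hEi, ← hhq]; ring
  have hB : Ei - Em = Em * (β * hp / ε) := by
    have := barrierE_succ ε β r N i hi1
    rw [← hEi, ← hEm, ← hhp] at this
    rw [this]; ring
  unfold LN1
  rw [show meshh r (i+1) = hq from rfl, show meshh r i = hp from rfl,
    show barrierE ε β r N i = Ei from rfl,
    show barrierE ε β r N (i-1) = Em from rfl, hA, hB]
  have e1 : Ei * (β * hq / ε) / hq = Ei * β / ε := by
    field_simp
  have e2 : Em * (β * hp / ε) / hp = Em * β / ε := by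
    field_simp
  have e3 : c i * (Em * (β * hp / ε)) / hp = c i * Em * β / ε := by
    field_simp
  rw [e1, e3]
  have hbarpos : 0 < (hp + hq) / 2 := by linarith
  rw [e2]
  have e4 : -ε * (Ei * β / ε - Em * β / ε) = -(β * Em * β / ε * hp) := by
    have h5 : Ei * β / ε - Em * β / ε = (Ei - Em) * β / ε := by ring
    rw [h5, hB]
    field_simp
  rw [e4]
  have k1 : β * Em * β / ε * hp / ((hp + hq) / 2) ≤ β * Em * β / ε := by
    rw [div_le_iff₀ hbarpos]
    have h6 : hp ≤ (hp + hq) / 2 := by linarith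
    have h7 : 0 ≤ β * Em * β / ε := by positivity
    nlinarith
  have k2 : β * Em * β / ε ≤ c i * Em * β / ε := by
    gcongr
    exact hc i hi1 hiN
  have k3 : 0 ≤ b i * Ei := mul_nonneg (hb i hi1 hiN) hEipos.le
  have : -(β * Em * β / ε * hp) / ((hp + hq) / 2)
      = -(β * Em * β / ε * hp / ((hp + hq) / 2)) := by ring
  rw [this]
  linarith
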